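/- arXiv:1711.05698 — 11 statements merged into one kernel-verified Lean document; each statement's English description precedes it below -/
import Mathlib

section
/- Let P → Q (pointwise) and assume I → P. If Q holds locally with respect to T^P but fails globally with respect to T, then every counterexample trace to Q with respect to T (an initialized trace of Q-states ending in a ¬Q state) contains at least two distinct ¬P states. -/
variable {S : Type*}

/-- Projection of transition relation `T` onto property `P`. -/
def TP (T : S → S → Prop) (P : S → Prop) (s s' : S) : Prop :=
  (P s ∧ T s s') ∨ (¬ P s ∧ s = s')

/-- Property `R` holds w.r.t. initial states `I` and transition relation `U`:
no initialized `U`-trace of `R`-states ends in a `¬R`-state. -/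
def Holds (I : S → Prop) (U : S → S → Prop) (R : S → Prop) : Prop :=
  ¬ ∃ (m : ℕ) (s : ℕ → S), I (s 0) ∧ (∀ i < m, U (s i) (s (i+1))) ∧
      (∀ i < m, R (s i)) ∧ ¬ R (s m)

theorem two_bad_states_of_local_holds (I : S → Prop) (T : S → S → Prop) (P Q : S → Prop)
    (hPQ : ∀ s, P s → Q s) (hIP : ∀ s, I s → P s)
    (hloc : ¬ ∃ (m : ℕ) (s : ℕ → S), I (s 0) ∧ (∀ i < m, TP T P (s i) (s (i+1))) ∧
        (∀ i < m, P (s i)) ∧ ¬ Q (s m))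
    (hfail : ¬ Holds I T Q) :
    ∀ (m : ℕ) (s : ℕ → S), I (s 0) → (∀ i < m, T (s i) (s (i+1))) →
      (∀ i < m, Q (s i)) → ¬ Q (s m) →
      ∃ i j, i ≤ m ∧ j ≤ m ∧ ¬ P (s i) ∧ ¬ P (s j) ∧ s i ≠ s j := by
  intro m s hI hT hQ hQm
  by_cases h : ∃ i, i < m ∧ ¬ P (s i)
  · obtain ⟨i, him, hPi⟩ := h
    exact ⟨i, m, le_of_lt him, le_refl m, hPi, fun hPm => hQm (hPQ _ hPm),
      fun he => hQm (he ▸ hQ i him)⟩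
  · exfalso
    push_neg at h
    exact hloc ⟨m, s, hI, fun i hi => Or.inl ⟨h i hi, hT i hi⟩, h, hQm⟩
end

section
/- The aggregate property P = P₁ ∧ … ∧ P_k holds with respect to transition relation T if and only if every individual property P_j (j = 1,…,k) holds with respect to T. -/
variable {S : Type*}

theorem aggregate_iff_each (I : S → Prop) (T : S → S → Prop) (k : ℕ)
    (Pj : Fin k → S → Prop) (hI : ∀ j s, I s → Pj j s) :
    Holds I T (fun s => ∀ j, Pj j s) ↔ ∀ j, Holds I T (Pj j) := by
  classical
  constructor
  · intro hAgg j hj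
    obtain ⟨m, s, hI0, hT, hR, hRm⟩ := hj
    have hQm : ¬ ∀ j', Pj j' (s m) := fun h => hRm (h j)
    have hex : ∃ n, ¬ ∀ j', Pj j' (s n) := ⟨m, hQm⟩
    have hnm : Nat.find hex ≤ m := Nat.find_min' hex hQm
    exact hAgg ⟨Nat.find hex, s, hI0,
      fun i hi => hT i (lt_of_lt_of_le hi hnm),
      fun i hi => not_not.mp (Nat.find_min hex hi),
      Nat.find_spec hex⟩
  · intro h hAgg
    obtain ⟨m, s, hI0, hT, hR, hRm⟩ := hAgg
    obtain ⟨j, hj⟩ := not_forall.mp hRm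
    exact h j ⟨m, s, hI0, hT, fun i hi => hR i hi j, hj⟩
end

section
/- The aggregate property P holds with respect to T if and only if P holds with respect to its own projection T^P. -/
variable {S : Type*}

theorem holds_iff_holds_proj (I : S → Prop) (T : S → S → Prop) (P : S → Prop)
    (hIP : ∀ s, I s → P s) :
    Holds I T P ↔ Holds I (TP T P) P := by
  unfold Holds
  apply not_congr
  constructor
  · rintro ⟨m, s, h0, hT, hP, hm⟩
    exact ⟨m, s, h0, fun i hi => Or.inl ⟨hP i hi, hT i hi⟩, hP, hm⟩
  · rintro ⟨m, s, h0, hT, hP, hm⟩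
    refine ⟨m, s, h0, fun i hi => ?_, hP, hm⟩
    rcases hT i hi with ⟨_, h⟩ | ⟨hnP, _⟩
    · exact h
    · exact absurd (hP i hi) hnP
end

section
/- Let P = P₁ ∧ … ∧ P_k be the aggregate property. Then P holds with respect to T if and only if every P_i (i = 1,…,k) holds with respect to T^P, i.e., holds locally. -/
variable {S : Type*}

theorem aggregate_iff_each_local (I : S → Prop) (T : S → S → Prop) (k : ℕ)
    (Pj : Fin k → S → Prop) (hI : ∀ i s, I s → Pj i s) :
    Holds I T (fun s => ∀ i, Pj i s) ↔
      ∀ i, Holds I (TP T (fun s => ∀ i, Pj i s)) (Pj i) := by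
  classical
  constructor
  · intro hP i ⟨m, s, h0, hstep, hR, hnot⟩
    by_cases hall : ∀ j < m, ∀ l, Pj l (s j)
    · apply hP
      refine ⟨m, s, h0, fun j hj => ?_, hall, fun h => hnot (h i)⟩
      rcases hstep j hj with ⟨_, ht⟩ | ⟨hnp, _⟩
      · exact ht
      · exact absurd (hall j hj) hnp
    · push_neg at hall
      obtain ⟨j, hjm, hjnp⟩ := hall
      have hQ : ∃ n, n < m ∧ ∃ l, ¬ Pj l (s n) := ⟨j, hjm, hjnp⟩
      set n := Nat.find hQ with hn
      obtain ⟨hnm, l0, hnp⟩ := Nat.find_spec hQ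
      have hlt : ∀ l < n, ∀ q, Pj q (s l) := by
        intro l hl q
        have h2 := Nat.find_min hQ hl
        push_neg at h2
        exact h2 (lt_trans hl hnm) q
      apply hP
      refine ⟨n, s, h0, fun l hl => ?_, hlt, fun hh => hnp (hh l0)⟩
      rcases hstep l (lt_trans hl hnm) with ⟨_, ht⟩ | ⟨hnpl, _⟩
      · exact ht
      · exact absurd (hlt l hl) hnpl
  · intro h ⟨m, s, h0, hstep, hR, hnot⟩
    obtain ⟨i, hi⟩ := not_forall.mp hnot
    exact h i ⟨m, s, h0, fun j hj => Or.inl ⟨hR j hj, hstep j hj⟩,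
      fun j hj => hR j hj i, hi⟩
end

section
/- Suppose the aggregate property P = P₁ ∧ … ∧ P_k fails with respect to T, and let D be the debugging set of properties that fail with respect to T^P (fail locally). Then for every counterexample trace s₀,…,s_m to P with respect to T, the final state s_m falsifies at least one property P_i belonging to D. -/
variable {S : Type*}

theorem cex_final_falsifies_debugging (I : S → Prop) (T : S → S → Prop) (k : ℕ)
    (Pj : Fin k → S → Prop) (hI : ∀ i s, I s → Pj i s)
    (P : S → Prop) (hP : ∀ s, P s ↔ ∀ i, Pj i s)
    (hfail : ∃ (m : ℕ) (s : ℕ → S), I (s 0) ∧ (∀ i < m, T (s i) (s (i+1))) ∧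
        (∀ i < m, P (s i)) ∧ ¬ P (s m)) :
    ∀ (m : ℕ) (s : ℕ → S), I (s 0) → (∀ i < m, T (s i) (s (i+1))) →
      (∀ i < m, P (s i)) → ¬ P (s m) →
      ∃ i : Fin k, ¬ Pj i (s m) ∧
        ∃ (n : ℕ) (t : ℕ → S), I (t 0) ∧ (∀ j < n, TP T P (t j) (t (j+1))) ∧
          (∀ j < n, Pj i (t j)) ∧ ¬ Pj i (t n) := by
  intro m s h0 hT hPall hPm
  have : ∃ i : Fin k, ¬ Pj i (s m) := by
    by_contra h
    push_neg at h
    exact hPm ((hP (s m)).mpr h)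
  obtain ⟨i, hi⟩ := this
  refine ⟨i, hi, ?_⟩
  have hex : ∃ n, ¬ Pj i (s n) := ⟨m, hi⟩
  classical
  let n := Nat.find hex
  have hn : ¬ Pj i (s n) := Nat.find_spec hex
  have hnm : n ≤ m := Nat.find_min' hex hi
  refine ⟨n, s, h0, ?_, ?_, hn⟩
  · intro j hj
    exact Or.inl ⟨hPall j (lt_of_lt_of_le hj hnm), hT j (lt_of_lt_of_le hj hnm)⟩
  · intro j hj
    by_contra hc
    exact absurd hj (not_lt.mpr (Nat.find_min' hex hc))
end

section
/- If the aggregate property P = P₁ ∧ … ∧ P_k fails with respect to T, then the debugging set is nonempty: there exists at least one property P_i that fails with respect to T^P (i.e., fails locally). -/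
variable {S : Type*}

theorem debugging_set_nonempty (I : S → Prop) (T : S → S → Prop) (k : ℕ)
    (Pj : Fin k → S → Prop) (hI : ∀ i s, I s → Pj i s)
    (P : S → Prop) (hP : ∀ s, P s ↔ ∀ i, Pj i s)
    (hfail : ∃ (m : ℕ) (s : ℕ → S), I (s 0) ∧ (∀ i < m, T (s i) (s (i+1))) ∧
        (∀ i < m, P (s i)) ∧ ¬ P (s m)) :
    ∃ i : Fin k, ∃ (n : ℕ) (t : ℕ → S), I (t 0) ∧ (∀ j < n, TP T P (t j) (t (j+1))) ∧
        (∀ j < n, Pj i (t j)) ∧ ¬ Pj i (t n) := by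
  obtain ⟨m, s, h0, hT, hPall, hnP⟩ := hfail
  rw [hP] at hnP
  push_neg at hnP
  obtain ⟨i, hi⟩ := hnP
  exact ⟨i, m, s, h0,
    fun j hj => Or.inl ⟨hPall j hj, hT j hj⟩,
    fun j hj => (hP _).mp (hPall j hj) i, hi⟩
end

section
/- If every property P_i (i = 1,…,k) holds locally (with respect to T^P, where P is the aggregate property), then every P_i holds globally (with respect to T). -/
variable {S : Type*}

theorem global_of_all_local (I : S → Prop) (T : S → S → Prop) (k : ℕ)
    (Pj : Fin k → S → Prop) (hI : ∀ i s, I s → Pj i s)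
    (P : S → Prop) (hP : ∀ s, P s ↔ ∀ i, Pj i s)
    (hloc : ∀ i, Holds I (TP T P) (Pj i)) :
    ∀ i, Holds I T (Pj i) := by
  have main : ∀ m : ℕ, ∀ s : ℕ → S, I (s 0) → (∀ j < m, T (s j) (s (j+1))) →
      ∀ i, (∀ j < m, Pj i (s j)) → Pj i (s m) := by
    intro m
    induction m using Nat.strong_induction_on with
    | _ m IH =>
      intro s hI0 hT i hPi
      have hagg : ∀ j, j < m → P (s j) := by
        intro j
        induction j using Nat.strong_induction_on with
        | _ j IHj =>
          intro hj
          rw [hP]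
          intro i'
          exact IH j hj s hI0 (fun l hl => hT l (hl.trans hj)) i'
            (fun l hl => (hP _).mp (IHj l hl (hl.trans hj)) i')
      by_contra hcon
      exact hloc i ⟨m, s, hI0, fun j hj => Or.inl ⟨hagg j hj, hT j hj⟩, hPi, hcon⟩
  intro i h
  obtain ⟨m, s, h0, hT, hPi, hnot⟩ := h
  exact hnot (main m s h0 hT i hPi)
end

section
/- If clause C is inductive relative to F_j (i.e., I → C and C ∧ F_j ∧ T → C'), and F_j over-approximates Rch(I,T,j), then every state in Rch(I,T,j) satisfies C, so F_j ∧ C still over-approximates Rch(I,T,j). -/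
variable {S : Type*}

def Rch (I : S → Prop) (T : S → S → Prop) (j : ℕ) (t : S) : Prop :=
  ∃ m ≤ j, ∃ s : ℕ → S, I (s 0) ∧ (∀ i < m, T (s i) (s (i+1))) ∧ s m = t

theorem relative_inductive_clause_sound (I : S → Prop) (T : S → S → Prop)
    (Fj C : S → Prop) (j : ℕ)
    (hIC : ∀ s, I s → C s)
    (hrel : ∀ s s', C s ∧ Fj s ∧ T s s' → C s')
    (hover : ∀ s, Rch I T j s → Fj s) :
    ∀ s, Rch I T j s → Fj s ∧ C s := by
  rintro t ⟨m, hm, s, hI, hT, hend⟩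
  have key : ∀ i ≤ m, C (s i) := by
    intro i hi
    induction i with
    | zero => exact hIC _ hI
    | succ k ih =>
      have hk : k ≤ m := Nat.le_of_succ_le hi
      have hCk := ih hk
      have hFk : Fj (s k) := hover _ ⟨k, hk.trans hm, s, hI,
        fun i h => hT i (h.trans_le hk), rfl⟩
      exact hrel _ _ ⟨hCk, hFk, hT k hi⟩
  refine ⟨hover _ ⟨m, hm, s, hI, hT, hend⟩, hend ▸ key m le_rfl⟩
end

section
/- If a property P_i holds locally (w.r.t. T^P where P is the aggregate of P₁,…,P_k) but fails globally (w.r.t. T), then in every global counterexample trace s₀,…,s_m to P_i, some state s_j with j < m falsifies another property P_l with l ≠ i. -/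
variable {S : Type*}

theorem other_prop_fails_first (I : S → Prop) (T : S → S → Prop) (k : ℕ)
    (Pj : Fin k → S → Prop) (hI : ∀ i s, I s → Pj i s)
    (P : S → Prop) (hP : ∀ s, P s ↔ ∀ i, Pj i s)
    (i : Fin k)
    (hloc : Holds I (TP T P) (Pj i)) :
    ∀ (m : ℕ) (s : ℕ → S), I (s 0) → (∀ j < m, T (s j) (s (j+1))) →
      (∀ j < m, Pj i (s j)) → ¬ Pj i (s m) →
      ∃ j < m, ∃ l : Fin k, l ≠ i ∧ ¬ Pj l (s j) := by
  intro m s h0 hT hPi hNi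
  by_contra hc
  push_neg at hc
  exact hloc ⟨m, s, h0, fun j hj => Or.inl ⟨(hP (s j)).2 fun l => by
    by_cases hl : l = i
    · exact hl ▸ hPi j hj
    · exact hc j hj l hl, hT j hj⟩, hPi, hNi⟩
end

section
/- If a property P_i fails locally (with respect to T^P), then P_i also fails globally (with respect to T), and moreover there exists a global counterexample to P_i in which all non-final states satisfy the aggregate property P. -/
variable {S : Type*}

theorem local_fail_implies_global_fail (I : S → Prop) (T : S → S → Prop) (k : ℕ)
    (Pj : Fin k → S → Prop) (hI : ∀ i s, I s → Pj i s)
    (P : S → Prop) (hP : ∀ s, P s ↔ ∀ i, Pj i s)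
    (i : Fin k)
    (hlocfail : ∃ (m : ℕ) (s : ℕ → S), I (s 0) ∧
        (∀ j < m, TP T P (s j) (s (j+1))) ∧ (∀ j < m, Pj i (s j)) ∧ ¬ Pj i (s m)) :
    ∃ (m : ℕ) (s : ℕ → S), I (s 0) ∧ (∀ j < m, T (s j) (s (j+1))) ∧
      (∀ j < m, Pj i (s j)) ∧ ¬ Pj i (s m) ∧ (∀ j < m, P (s j)) := by
  obtain ⟨m, s, h0, hT, hPj, hfail⟩ := hlocfail
  have hPall : ∀ j < m, P (s j) := by
    by_contra hc
    push_neg at hc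
    obtain ⟨j₀, hj₀m, hj₀P⟩ := hc
    have heq : ∀ n, j₀ ≤ n → n ≤ m → s n = s j₀ := by
      intro n
      induction n with
      | zero => intro h _; rw [Nat.le_zero.mp h]
      | succ n ih =>
        intro h1 h2
        rcases Nat.lt_or_ge j₀ (n + 1) with hlt | hge
        · have hn : j₀ ≤ n := Nat.lt_succ_iff.mp hlt
          have hnlt : n < m := by omega
          have hsn := ih hn (le_of_lt hnlt)
          rcases hT n hnlt with ⟨hp, _⟩ | ⟨_, he⟩
          · exact absurd (hsn ▸ hp) hj₀P
          · rw [← he, hsn]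
        · have : n + 1 = j₀ := le_antisymm hge h1
          rw [this]
    have := heq m (le_of_lt hj₀m) le_rfl
    exact hfail (this ▸ hPj j₀ hj₀m)
  refine ⟨m, s, h0, ?_, hPj, hfail, hPall⟩
  intro j hj
  rcases hT j hj with ⟨_, ht⟩ | ⟨hnp, _⟩
  · exact ht
  · exact absurd (hPall j hj) hnp
end

section
/- Let P = P₁ ∧ … ∧ P_k. If every counterexample to the aggregate property P with respect to T has its final state falsifying only properties outside a set D ⊆ {1,…,k}, where D is the set of indices whose properties fail locally, then P has no counterexample at all (i.e., the final state of any counterexample to P must falsify a property whose index is in D). -/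
variable {S : Type*}

theorem no_cex_if_final_outside_debug (I : S → Prop) (T : S → S → Prop) (k : ℕ)
    (Pj : Fin k → S → Prop) (hI : ∀ i s, I s → Pj i s)
    (P : S → Prop) (hP : ∀ s, P s ↔ ∀ i, Pj i s)
    (D : Set (Fin k))
    (hD : ∀ i, i ∈ D ↔ ∃ (n : ℕ) (t : ℕ → S), I (t 0) ∧
        (∀ j < n, TP T P (t j) (t (j+1))) ∧ (∀ j < n, Pj i (t j)) ∧ ¬ Pj i (t n))
    (hout : ∀ (m : ℕ) (s : ℕ → S), I (s 0) → (∀ j < m, T (s j) (s (j+1))) →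
        (∀ j < m, P (s j)) → ¬ P (s m) → ∀ i : Fin k, ¬ Pj i (s m) → i ∉ D) :
    ¬ ∃ (m : ℕ) (s : ℕ → S), I (s 0) ∧ (∀ j < m, T (s j) (s (j+1))) ∧
        (∀ j < m, P (s j)) ∧ ¬ P (s m) := by
  rintro ⟨m, s, h0, hT, hPs, hPm⟩
  obtain ⟨i, hi⟩ : ∃ i, ¬ Pj i (s m) := by
    by_contra h; push_neg at h; exact hPm ((hP (s m)).2 h)
  have hin : i ∈ D := (hD i).2 ⟨m, s, h0,
    fun j hj => Or.inl ⟨hPs j hj, hT j hj⟩,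
    fun j hj => (hP (s j)).1 (hPs j hj) i, hi⟩
  exact hout m s h0 hT hPs hPm i hi hin
end
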